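/- arXiv:1411.2681 — 2 statements merged into one kernel-verified Lean document; each statement's English description precedes it below -/
import Mathlib

section
/- If fₙ is a sequence of nonnegative bounded USC functions on [0,1] whose hypographs H_{fₙ} converge in the Hausdorff metric to a compact set C ⊆ ℝ², then there exists a nonnegative USC function f : [0,1] → [0,∞) such that C = H_f; explicitly, f(x) = sup over sequences xₙ → x of limsup fₙ(xₙ). -/
/-!
A point lies in `C` iff it is a limit of points `qₙ ∈ H_{fₙ}`, and already if `qₙ ∈ H_{fₙ}` only
frequently. Hence closed sets containing every `H_{fₙ}`, points lying in every `H_{fₙ}`, and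
continuous maps preserving every `H_{fₙ}` pass to `C`: `C` lies in `[0,1] × [0,∞)`, contains the
base `[0,1] × {0}` and is stable under clipping heights at any level `c ≥ 0`. Such a compact set
is the hypograph of its upper profile `f x = sup {y | (x, y) ∈ C}`, and a closed hypograph forces
`f` to be upper semicontinuous. For the formula: if `fₙ(uₙ) > c` frequently with `uₙ → x`, then
`(x, c) ∈ C`, so `c ≤ f x`; conversely, approximating `(x, f x)` by points of `H_{fₙ}` gives a
sequence realizing the supremum.
-/

open Set Metric Filter

def hypo (f : ℝ → ℝ) : Set (EuclideanSpace ℝ (Fin 2)) :=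
  {p | p 0 ∈ Set.Icc (0:ℝ) 1 ∧ 0 ≤ p 1 ∧ p 1 ≤ f (p 0)}

open Topology

section HausdorffLimit

variable {α : Type*} [PseudoMetricSpace α] {A : ℕ → Set α} {C : Set α}

theorem exists_tendsto_of_tendsto_hausdorffDist (hfin : ∀ n, hausdorffEDist (A n) C ≠ ⊤)
    (hlim : Tendsto (fun n => hausdorffDist (A n) C) atTop (𝓝 0)) {p : α} (hp : p ∈ C) :
    ∃ q : ℕ → α, (∀ n, q n ∈ A n) ∧ Tendsto q atTop (𝓝 p) := by
  have hq : ∀ n : ℕ, ∃ z ∈ A n, dist z p < hausdorffDist (A n) C + 1 / (n + 1) := fun n =>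
    exists_dist_lt_of_hausdorffDist_lt' hp (lt_add_of_pos_right _ (by positivity)) (hfin n)
  choose q hqA hqp using hq
  have hbound : Tendsto (fun n : ℕ => hausdorffDist (A n) C + 1 / (n + 1)) atTop (𝓝 0) := by
    simpa using hlim.add tendsto_one_div_add_atTop_nhds_zero_nat
  exact ⟨q, hqA, tendsto_iff_dist_tendsto_zero.2 <|
    squeeze_zero (fun _ => dist_nonneg) (fun n => (hqp n).le) hbound⟩

theorem mem_of_frequently_of_tendsto_hausdorffDist (hC : IsClosed C)
    (hfin : ∀ n, hausdorffEDist (A n) C ≠ ⊤)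
    (hlim : Tendsto (fun n => hausdorffDist (A n) C) atTop (𝓝 0)) {q : ℕ → α} {p : α}
    (hqA : ∃ᶠ n in atTop, q n ∈ A n) (hqp : Tendsto q atTop (𝓝 p)) : p ∈ C := by
  rw [← hC.closure_eq, Metric.mem_closure_iff]
  intro ε hε
  have hclose : ∀ᶠ n in atTop, dist (q n) p < ε / 2 ∧ hausdorffDist (A n) C < ε / 2 :=
    ((tendsto_iff_dist_tendsto_zero.1 hqp).eventually_lt_const (half_pos hε)).and
      (hlim.eventually_lt_const (half_pos hε))
  obtain ⟨n, hn, hqnp, hdist⟩ := (hqA.and_eventually hclose).exists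
  obtain ⟨b, hb, hqb⟩ := exists_dist_lt_of_hausdorffDist_lt hn hdist (hfin n)
  exact ⟨b, hb, (dist_triangle_left p b (q n)).trans_lt (by linarith)⟩

theorem subset_of_tendsto_hausdorffDist {K : Set α} (hK : IsClosed K) (hAK : ∀ n, A n ⊆ K)
    (hfin : ∀ n, hausdorffEDist (A n) C ≠ ⊤)
    (hlim : Tendsto (fun n => hausdorffDist (A n) C) atTop (𝓝 0)) : C ⊆ K := fun p hp => by
  obtain ⟨q, hqA, hqp⟩ := exists_tendsto_of_tendsto_hausdorffDist hfin hlim hp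
  exact hK.mem_of_tendsto hqp (Eventually.of_forall fun n => hAK n (hqA n))

theorem mapsTo_of_tendsto_hausdorffDist {T : α → α} (hT : Continuous T)
    (hTA : ∀ n, MapsTo T (A n) (A n)) (hC : IsClosed C) (hfin : ∀ n, hausdorffEDist (A n) C ≠ ⊤)
    (hlim : Tendsto (fun n => hausdorffDist (A n) C) atTop (𝓝 0)) : MapsTo T C C := fun p hp => by
  obtain ⟨q, hqA, hqp⟩ := exists_tendsto_of_tendsto_hausdorffDist hfin hlim hp
  exact mem_of_frequently_of_tendsto_hausdorffDist hC hfin hlim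
    (Frequently.of_forall fun n => hTA n (hqA n)) ((hT.tendsto p).comp hqp)

end HausdorffLimit

section Hypograph

theorem vec2_eta (p : EuclideanSpace ℝ (Fin 2)) : !₂[p 0, p 1] = p := by
  ext i; fin_cases i <;> rfl

def halfStrip : Set (EuclideanSpace ℝ (Fin 2)) :=
  {p | p 0 ∈ Icc 0 1 ∧ 0 ≤ p 1}

theorem hypo_subset_halfStrip (f : ℝ → ℝ) : hypo f ⊆ halfStrip :=
  fun _ hp => ⟨hp.1, hp.2.1⟩

theorem isClosed_halfStrip : IsClosed halfStrip :=
  (isClosed_Icc.preimage (f := fun p : EuclideanSpace ℝ (Fin 2) => p 0) (by fun_prop)).inter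
    (isClosed_Ici.preimage (f := fun p : EuclideanSpace ℝ (Fin 2) => p 1) (by fun_prop))

theorem vec2_zero_mem_hypo {f : ℝ → ℝ} (hf : ∀ x ∈ Icc (0:ℝ) 1, 0 ≤ f x) {x : ℝ}
    (hx : x ∈ Icc (0:ℝ) 1) : !₂[x, 0] ∈ hypo f :=
  ⟨hx, le_rfl, hf x hx⟩

theorem isBounded_hypo {f : ℝ → ℝ} {M : ℝ} (hM : ∀ x ∈ Icc (0:ℝ) 1, f x ≤ M) :
    Bornology.IsBounded (hypo f) := by
  have hK : IsCompact ((fun q : ℝ × ℝ => !₂[q.1, q.2]) '' Icc 0 1 ×ˢ Icc 0 M) :=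
    (isCompact_Icc.prod isCompact_Icc).image (by fun_prop)
  refine hK.isBounded.subset fun p ⟨hx, hy0, hyf⟩ => ?_
  exact ⟨(p 0, p 1), ⟨hx, hy0, hyf.trans (hM _ hx)⟩, vec2_eta p⟩

def clipHeight (c : ℝ) (p : EuclideanSpace ℝ (Fin 2)) : EuclideanSpace ℝ (Fin 2) :=
  !₂[p 0, min (p 1) c]

theorem continuous_clipHeight (c : ℝ) : Continuous (clipHeight c) := by
  unfold clipHeight; fun_prop

theorem mapsTo_clipHeight_hypo (f : ℝ → ℝ) {c : ℝ} (hc : 0 ≤ c) :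
    MapsTo (clipHeight c) (hypo f) (hypo f) :=
  fun _ ⟨hx, hy0, hyf⟩ => ⟨hx, le_min hy0 hc, (min_le_left _ _).trans hyf⟩

theorem upperSemicontinuousOn_of_isClosed_hypo {f : ℝ → ℝ} (hf : ∀ x ∈ Icc (0:ℝ) 1, 0 ≤ f x)
    (hclosed : IsClosed (hypo f)) : UpperSemicontinuousOn f (Icc 0 1) := by
  intro x hx y hy
  by_contra hcon
  obtain ⟨u, hux, hu⟩ := exists_seq_forall_of_frequently
    ((not_eventually.1 hcon).and_eventually self_mem_nhdsWithin)
  have hmem : !₂[x, y] ∈ hypo f := hclosed.mem_of_tendsto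
    (((by fun_prop : Continuous fun x : ℝ => !₂[x, y]).tendsto x).comp
      (hux.mono_right nhdsWithin_le_nhds))
    (Eventually.of_forall fun n => ⟨(hu n).2, (hf x hx).trans hy.le, not_lt.1 (hu n).1⟩)
  exact hmem.2.2.not_gt hy

end Hypograph

noncomputable def sectionSup (C : Set (EuclideanSpace ℝ (Fin 2))) (x : ℝ) : ℝ :=
  sSup {y | !₂[x, y] ∈ C}

section SectionSup

variable {C : Set (EuclideanSpace ℝ (Fin 2))}

theorem bddAbove_section (hC : IsCompact C) (x : ℝ) : BddAbove {y | !₂[x, y] ∈ C} :=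
  (hC.image (f := fun p : EuclideanSpace ℝ (Fin 2) => p 1) (by fun_prop)).bddAbove.mono
    fun y hy => mem_image_of_mem (fun p : EuclideanSpace ℝ (Fin 2) => p 1) hy

theorem le_sectionSup (hC : IsCompact C) {x y : ℝ} (h : !₂[x, y] ∈ C) : y ≤ sectionSup C x :=
  le_csSup (bddAbove_section hC x) h

theorem vec2_sectionSup_mem (hC : IsCompact C) {x y : ℝ} (h : !₂[x, y] ∈ C) :
    !₂[x, sectionSup C x] ∈ C :=
  (hC.isClosed.preimage (f := fun y : ℝ => !₂[x, y]) (by fun_prop)).csSup_mem ⟨y, h⟩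
    (bddAbove_section hC x)

theorem eq_hypo_sectionSup (hC : IsCompact C) (hsub : C ⊆ halfStrip)
    (hbase : ∀ x ∈ Icc (0:ℝ) 1, !₂[x, 0] ∈ C) (hclip : ∀ c, 0 ≤ c → MapsTo (clipHeight c) C C) :
    C = hypo (sectionSup C) := by
  ext p
  refine ⟨fun hp => ⟨(hsub hp).1, (hsub hp).2, le_sectionSup hC ((vec2_eta p).symm ▸ hp)⟩,
    fun ⟨hx, hy0, hyf⟩ => ?_⟩
  have := hclip (p 1) hy0 (vec2_sectionSup_mem hC (hbase _ hx))
  simpa [clipHeight, min_eq_right hyf, vec2_eta] using this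

end SectionSup

section LimsupFormula

variable {F : ℕ → ℝ → ℝ} {f : ℝ → ℝ}

theorem limsup_le_of_tendsto_hausdorffDist_hypo (hF0 : ∀ n, ∀ x ∈ Icc (0:ℝ) 1, 0 ≤ F n x)
    (hf0 : ∀ x ∈ Icc (0:ℝ) 1, 0 ≤ f x) (hclosed : IsClosed (hypo f))
    (hfin : ∀ n, hausdorffEDist (hypo (F n)) (hypo f) ≠ ⊤)
    (hlim : Tendsto (fun n => hausdorffDist (hypo (F n)) (hypo f)) atTop (𝓝 0))
    {u : ℕ → ℝ} (hu : ∀ n, u n ∈ Icc (0:ℝ) 1) {x : ℝ} (hx : x ∈ Icc (0:ℝ) 1)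
    (hux : Tendsto u atTop (𝓝 x)) : limsup (fun n => F n (u n)) atTop ≤ f x := by
  by_contra! hlt
  obtain ⟨c, hfc, hcL⟩ := exists_between hlt
  have hcob : IsCoboundedUnder (· ≤ ·) atTop (fun n => F n (u n)) :=
    isCoboundedUnder_le_of_le atTop fun n => hF0 n _ (hu n)
  have hxc : !₂[x, c] ∈ hypo f := mem_of_frequently_of_tendsto_hausdorffDist hclosed hfin hlim
    ((frequently_lt_of_lt_limsup hcob hcL).mono fun n hn => ⟨hu n, (hf0 x hx).trans hfc.le, hn.le⟩)
    (((by fun_prop : Continuous fun x : ℝ => !₂[x, c]).tendsto x).comp hux)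
  exact hxc.2.2.not_gt hfc

theorem exists_tendsto_le_limsup_of_tendsto_hausdorffDist_hypo {M : ℝ}
    (hM : ∀ n, ∀ x ∈ Icc (0:ℝ) 1, F n x ≤ M)
    (hfin : ∀ n, hausdorffEDist (hypo (F n)) (hypo f) ≠ ⊤)
    (hlim : Tendsto (fun n => hausdorffDist (hypo (F n)) (hypo f)) atTop (𝓝 0))
    {x : ℝ} (hx : x ∈ Icc (0:ℝ) 1) (hfx : 0 ≤ f x) :
    ∃ u : ℕ → ℝ, (∀ n, u n ∈ Icc (0:ℝ) 1) ∧ Tendsto u atTop (𝓝 x) ∧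
      f x ≤ limsup (fun n => F n (u n)) atTop := by
  obtain ⟨q, hq, hqx⟩ := exists_tendsto_of_tendsto_hausdorffDist hfin hlim
    (⟨hx, hfx, le_rfl⟩ : !₂[x, f x] ∈ hypo f)
  have hx0 : Tendsto (fun n => q n 0) atTop (𝓝 x) :=
    ((by fun_prop : Continuous fun p : EuclideanSpace ℝ (Fin 2) => p 0).tendsto _).comp hqx
  have hx1 : Tendsto (fun n => q n 1) atTop (𝓝 (f x)) :=
    ((by fun_prop : Continuous fun p : EuclideanSpace ℝ (Fin 2) => p 1).tendsto _).comp hqx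
  refine ⟨fun n => q n 0, fun n => (hq n).1, hx0, ?_⟩
  calc f x = limsup (fun n => q n 1) atTop := hx1.limsup_eq.symm
    _ ≤ limsup (fun n => F n (q n 0)) atTop :=
      limsup_le_limsup (Eventually.of_forall fun n => (hq n).2.2)
        hx1.isBoundedUnder_ge.isCoboundedUnder_le (isBoundedUnder_of ⟨M, fun n => hM n _ (hq n).1⟩)

theorem isGreatest_limsup_of_tendsto_hausdorffDist_hypo {M : ℝ}
    (hF0 : ∀ n, ∀ x ∈ Icc (0:ℝ) 1, 0 ≤ F n x) (hM : ∀ n, ∀ x ∈ Icc (0:ℝ) 1, F n x ≤ M)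
    (hf0 : ∀ x ∈ Icc (0:ℝ) 1, 0 ≤ f x) (hclosed : IsClosed (hypo f))
    (hfin : ∀ n, hausdorffEDist (hypo (F n)) (hypo f) ≠ ⊤)
    (hlim : Tendsto (fun n => hausdorffDist (hypo (F n)) (hypo f)) atTop (𝓝 0))
    {x : ℝ} (hx : x ∈ Icc (0:ℝ) 1) :
    IsGreatest {y | ∃ u : ℕ → ℝ, (∀ n, u n ∈ Icc (0:ℝ) 1) ∧ Tendsto u atTop (𝓝 x) ∧
      y = limsup (fun n => F n (u n)) atTop} (f x) := by
  obtain ⟨u, hu, hux, hle⟩ :=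
    exists_tendsto_le_limsup_of_tendsto_hausdorffDist_hypo hM hfin hlim hx (hf0 x hx)
  refine ⟨⟨u, hu, hux, le_antisymm hle ?_⟩, ?_⟩
  · exact limsup_le_of_tendsto_hausdorffDist_hypo hF0 hf0 hclosed hfin hlim hu hx hux
  · rintro _ ⟨v, hv, hvx, rfl⟩
    exact limsup_le_of_tendsto_hausdorffDist_hypo hF0 hf0 hclosed hfin hlim hv hx hvx

end LimsupFormula

theorem stmt_9_general (F : ℕ → ℝ → ℝ)
    (h0 : ∀ n, ∀ x ∈ Set.Icc (0:ℝ) 1, 0 ≤ F n x)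
    (hbdd : ∃ M : ℝ, ∀ n, ∀ x ∈ Set.Icc (0:ℝ) 1, F n x ≤ M)
    (C : Set (EuclideanSpace ℝ (Fin 2))) (hC : IsCompact C) (hCne : C.Nonempty)
    (hconv : Filter.Tendsto (fun n => Metric.hausdorffDist (hypo (F n)) C)
      Filter.atTop (nhds 0)) :
    ∃ f : ℝ → ℝ,
      (∀ x ∈ Set.Icc (0:ℝ) 1, 0 ≤ f x) ∧
      UpperSemicontinuousOn f (Set.Icc (0:ℝ) 1) ∧
      C = hypo f ∧
      (∀ x ∈ Set.Icc (0:ℝ) 1,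
        f x = sSup {y : ℝ | ∃ u : ℕ → ℝ, (∀ n, u n ∈ Set.Icc (0:ℝ) 1) ∧
          Filter.Tendsto u Filter.atTop (nhds x) ∧
          y = Filter.limsup (fun n => F n (u n)) Filter.atTop}) := by
  obtain ⟨M, hM⟩ := hbdd
  have hfin : ∀ n, hausdorffEDist (hypo (F n)) C ≠ ⊤ := fun n =>
    hausdorffEDist_ne_top_of_nonempty_of_bounded
      ⟨_, vec2_zero_mem_hypo (h0 n) (left_mem_Icc.2 zero_le_one)⟩ hCne (isBounded_hypo (hM n))
      hC.isBounded
  have hbase : ∀ x ∈ Icc (0:ℝ) 1, !₂[x, 0] ∈ C := fun x hx =>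
    mem_of_frequently_of_tendsto_hausdorffDist hC.isClosed hfin hconv
      (Frequently.of_forall fun n => vec2_zero_mem_hypo (h0 n) hx) tendsto_const_nhds
  have hCf : C = hypo (sectionSup C) := eq_hypo_sectionSup hC
    (subset_of_tendsto_hausdorffDist isClosed_halfStrip (fun _ => hypo_subset_halfStrip _)
      hfin hconv)
    hbase fun c hc => mapsTo_of_tendsto_hausdorffDist (continuous_clipHeight c)
      (fun n => mapsTo_clipHeight_hypo _ hc) hC.isClosed hfin hconv
  set f := sectionSup C
  have hf0 : ∀ x ∈ Icc (0:ℝ) 1, 0 ≤ f x := fun x hx =>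
    (hCf ▸ hbase x hx : !₂[x, 0] ∈ hypo f).2.2
  have hclosed : IsClosed (hypo f) := hCf ▸ hC.isClosed
  rw [hCf] at hfin hconv
  exact ⟨f, hf0, upperSemicontinuousOn_of_isClosed_hypo hf0 hclosed, hCf, fun x hx =>
    (isGreatest_limsup_of_tendsto_hausdorffDist_hypo h0 hM hf0 hclosed hfin hconv hx).csSup_eq.symm⟩

/-- If the hypographs of a sequence of nonnegative bounded USC functions on
`[0,1]` converge in the Hausdorff metric to a compact set `C`, then `C` is the
hypograph of a nonnegative USC function `f`, given explicitly by
`f(x) = sup over sequences xₙ → x in [0,1] of limsup fₙ(xₙ)`. -/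
theorem stmt_9 (F : ℕ → ℝ → ℝ)
    (h0 : ∀ n, ∀ x ∈ Set.Icc (0:ℝ) 1, 0 ≤ F n x)
    (husc : ∀ n, UpperSemicontinuousOn (F n) (Set.Icc (0:ℝ) 1))
    (hbdd : ∃ M : ℝ, ∀ n, ∀ x ∈ Set.Icc (0:ℝ) 1, F n x ≤ M)
    (C : Set (EuclideanSpace ℝ (Fin 2))) (hC : IsCompact C) (hCne : C.Nonempty)
    (hconv : Filter.Tendsto (fun n => Metric.hausdorffDist (hypo (F n)) C)
      Filter.atTop (nhds 0)) :
    ∃ f : ℝ → ℝ,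
      (∀ x ∈ Set.Icc (0:ℝ) 1, 0 ≤ f x) ∧
      UpperSemicontinuousOn f (Set.Icc (0:ℝ) 1) ∧
      C = hypo f ∧
      (∀ x ∈ Set.Icc (0:ℝ) 1,
        f x = sSup {y : ℝ | ∃ u : ℕ → ℝ, (∀ n, u n ∈ Set.Icc (0:ℝ) 1) ∧
          Filter.Tendsto u Filter.atTop (nhds x) ∧
          y = Filter.limsup (fun n => F n (u n)) Filter.atTop}) :=
  stmt_9_general F h0 hbdd C hC hCne hconv
end

section
/- The metric space (𝓔, ℍ) is separable: the countable family of step functions taking rational values on intervals with rational endpoints (with values at partition points equal to the max of the two adjacent values) is dense in (𝓔, ℍ). -/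
open Set Metric Filter

noncomputable def HH (f g : ℝ → ℝ) : ℝ := Metric.hausdorffDist (hypo f) (hypo g)

def memE (f : ℝ → ℝ) : Prop :=
  (∀ x ∈ Set.Icc (0:ℝ) 1, 0 ≤ f x) ∧ UpperSemicontinuousOn f (Set.Icc (0:ℝ) 1)

/-- The step function associated with a rational partition `x 0 < ⋯ < x n` and
rational values `q 0, …, q (n-1)`: it takes the value `q i` on `(x i, x (i+1))`
and, at a partition point, the max of the two adjacent values (the convention
making it USC). This is realized by taking a `sup` over the closed intervals. -/
noncomputable def ratStep (n : ℕ) (x : ℕ → ℚ) (q : ℕ → ℚ) : ℝ → ℝ := fun t =>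
  sSup {y : ℝ | ∃ i < n, t ∈ Set.Icc ((x i : ℝ)) ((x (i+1) : ℝ)) ∧ y = (q i : ℝ)}

/-- The countable family of nonnegative rational step functions. -/
def ratStepSet : Set (ℝ → ℝ) :=
  {g | ∃ (n : ℕ) (x : ℕ → ℚ) (q : ℕ → ℚ), 0 < n ∧ x 0 = 0 ∧ x n = 1 ∧
    (∀ i < n, x i < x (i+1)) ∧ (∀ i < n, 0 ≤ q i) ∧ g = ratStep n x q}


open Topology

/-!
A rational step function is determined by finitely many rationals, so the family is countable,
and taking the max of the adjacent values at partition points makes it upper semicontinuous.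
For density, fix a rational partition of mesh `δ`. On each cell the USC function `f` attains its
maximum at some `sᵢ`; choose a rational `qᵢ` in `(f sᵢ, f sᵢ + η)`. The resulting step function `g`
lies above `f`, so `hypo f ⊆ hypo g`, and a point `(t, y)` of `hypo g` in the cell `i` lies within
`δ + η` of the point `(sᵢ, min y (f sᵢ))` of `hypo f`. Hence `ℍ(f, g) ≤ δ + η`.
-/

lemma EuclideanSpace.dist_le_sum_dist {ι : Type*} [Fintype ι] (p p' : EuclideanSpace ℝ ι) :
    dist p p' ≤ ∑ i, dist (p i) (p' i) := by
  rw [EuclideanSpace.dist_eq, Real.sqrt_le_left (by positivity)]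
  exact Finset.sum_sq_le_sq_sum_of_nonneg fun _ _ => dist_nonneg

lemma hypo_mono {f g : ℝ → ℝ} (h : ∀ t ∈ Icc (0:ℝ) 1, f t ≤ g t) : hypo f ⊆ hypo g :=
  fun _ ⟨ht, h0, hf⟩ => ⟨ht, h0, hf.trans (h _ ht)⟩

lemma HH_le_of_le_of_forall_exists_near {f g : ℝ → ℝ} {δ η : ℝ} (hδ : 0 ≤ δ) (hη : 0 ≤ η)
    (hf : ∀ t ∈ Icc (0:ℝ) 1, 0 ≤ f t) (hfg : ∀ t ∈ Icc (0:ℝ) 1, f t ≤ g t)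
    (hgf : ∀ t ∈ Icc (0:ℝ) 1, ∃ s ∈ Icc (0:ℝ) 1, |t - s| ≤ δ ∧ g t ≤ f s + η) :
    HH f g ≤ δ + η := by
  refine hausdorffDist_le_of_mem_dist (by positivity)
    (fun p hp => ⟨p, hypo_mono hfg hp, by simpa using add_nonneg hδ hη⟩) ?_
  rintro p ⟨ht, hp0, hpg⟩
  obtain ⟨s, hs, hts, hgs⟩ := hgf _ ht
  refine ⟨!₂[s, min (p 1) (f s)], ⟨hs, le_min hp0 (hf s hs), min_le_right _ _⟩, ?_⟩
  refine (EuclideanSpace.dist_le_sum_dist _ _).trans ?_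
  rw [Fin.sum_univ_two]
  gcongr
  · simpa [Real.dist_eq] using hts
  · change dist (p 1) (min (p 1) (f s)) ≤ η
    rw [Real.dist_eq, abs_le]
    constructor <;> cases min_choice (p 1) (f s) <;> linarith [min_le_left (p 1) (f s)]

lemma UpperSemicontinuousOn.exists_rat_gt_lt_add {α : Type*} [TopologicalSpace α] {f : α → ℝ}
    {K : Set α} (hf : UpperSemicontinuousOn f K) (hK : K.Nonempty) (hKc : IsCompact K) {η : ℝ}
    (hη : 0 < η) : ∃ s ∈ K, ∃ r : ℚ, (∀ t ∈ K, f t < r) ∧ (r : ℝ) < f s + η := by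
  obtain ⟨s, hs, hmax⟩ := hf.exists_isMaxOn hK hKc
  obtain ⟨r, hsr, hr⟩ := exists_rat_btwn (lt_add_of_pos_right (f s) hη)
  exact ⟨s, hs, r, fun t ht => (hmax ht).trans_lt hsr, hr⟩

section Partition

variable {n : ℕ} {a : ℕ → ℝ}

lemma exists_mem_Icc_of_mem_Icc (hn : 0 < n) {t : ℝ} (ht : t ∈ Icc (a 0) (a n)) :
    ∃ i < n, t ∈ Icc (a i) (a (i+1)) := by
  classical
  have hex : ∃ j, t ≤ a (j+1) := ⟨n - 1, by rw [Nat.sub_add_cancel hn]; exact ht.2⟩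
  -- `a (Nat.find hex + 1)` is the first right endpoint above `t`, so the left one is below `t`.
  refine ⟨Nat.find hex, ?_, ?_, Nat.find_spec hex⟩
  · have := Nat.find_min' hex (m := n - 1) (by rw [Nat.sub_add_cancel hn]; exact ht.2)
    omega
  · cases h : Nat.find hex with
    | zero => exact ht.1
    | succ i => exact (not_le.1 (Nat.find_min hex (h ▸ Nat.lt_succ_self i))).le

lemma Icc_subset_Icc_of_lt_succ (ha : ∀ m < n, a m < a (m+1)) {i : ℕ} (hi : i < n) :
    Icc (a i) (a (i+1)) ⊆ Icc (a 0) (a n) := by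
  have hmono : MonotoneOn a (Iic n) := (strictMonoOn_Iic_of_lt_succ fun m hm => by
    simpa [Order.succ_eq_add_one] using ha m hm).monotoneOn
  exact Icc_subset_Icc (hmono (mem_Iic.2 n.zero_le) (mem_Iic.2 hi.le) i.zero_le)
    (hmono (mem_Iic.2 hi) (mem_Iic.2 le_rfl) hi)

end Partition

section RatStep

variable {n : ℕ} {x q : ℕ → ℚ}

lemma finite_ratStep_values (n : ℕ) (x q : ℕ → ℚ) (t : ℝ) :
    {y : ℝ | ∃ i < n, t ∈ Icc (x i : ℝ) (x (i+1)) ∧ y = q i}.Finite :=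
  ((finite_Iio n).image fun i => (q i : ℝ)).subset fun _ ⟨i, hi, _, hy⟩ => ⟨i, hi, hy.symm⟩

lemma le_ratStep {t : ℝ} {i : ℕ} (hi : i < n) (ht : t ∈ Icc (x i : ℝ) (x (i+1))) :
    (q i : ℝ) ≤ ratStep n x q t :=
  le_csSup (finite_ratStep_values n x q t).bddAbove ⟨i, hi, ht, rfl⟩

lemma exists_ratStep_eq {t : ℝ} {i : ℕ} (hi : i < n) (ht : t ∈ Icc (x i : ℝ) (x (i+1))) :
    ∃ j < n, t ∈ Icc (x j : ℝ) (x (j+1)) ∧ ratStep n x q t = q j := by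
  have hne : {y : ℝ | ∃ j < n, t ∈ Icc (x j : ℝ) (x (j+1)) ∧ y = q j}.Nonempty :=
    ⟨q i, i, hi, ht, rfl⟩
  exact hne.csSup_mem (finite_ratStep_values n x q t)

lemma ratStep_nonneg (hq : ∀ i < n, 0 ≤ q i) (t : ℝ) : 0 ≤ ratStep n x q t :=
  Real.sSup_nonneg fun _ ⟨i, hi, _, hy⟩ => hy ▸ by exact_mod_cast hq i hi

-- `hq` also covers the points `t` outside every interval, where `ratStep` is `sSup ∅ = 0`.
lemma ratStep_le_ratStep (hq : ∀ i < n, 0 ≤ q i) {t t₀ : ℝ}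
    (h : ∀ i < n, t ∈ Icc (x i : ℝ) (x (i+1)) → t₀ ∈ Icc (x i : ℝ) (x (i+1))) :
    ratStep n x q t ≤ ratStep n x q t₀ :=
  Real.sSup_le (fun _ ⟨i, hi, hti, hy⟩ => hy ▸ le_ratStep hi (h i hi hti)) (ratStep_nonneg hq t₀)

lemma upperSemicontinuous_ratStep (hq : ∀ i < n, 0 ≤ q i) :
    UpperSemicontinuous (ratStep n x q) := by
  intro t₀ y hy
  have hnear : ∀ᶠ t in 𝓝 t₀, ∀ i ∈ Iio n,
      t ∈ Icc (x i : ℝ) (x (i+1)) → t₀ ∈ Icc (x i : ℝ) (x (i+1)) := by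
    refine (eventually_all_finite (finite_Iio n)).2 fun i _ => ?_
    by_cases h : t₀ ∈ Icc (x i : ℝ) (x (i+1))
    · exact .of_forall fun _ _ => h
    · filter_upwards [isClosed_Icc.isOpen_compl.mem_nhds h] with t ht hti using absurd hti ht
  filter_upwards [hnear] with t ht
  exact (ratStep_le_ratStep hq ht).trans_lt hy

lemma memE_ratStep (hq : ∀ i < n, 0 ≤ q i) : memE (ratStep n x q) :=
  ⟨fun t _ => ratStep_nonneg hq t, (upperSemicontinuous_ratStep hq).upperSemicontinuousOn _⟩

lemma ratStep_congr {x' q' : ℕ → ℚ} (hx : ∀ i ≤ n, x i = x' i) (hq : ∀ i < n, q i = q' i) :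
    ratStep n x q = ratStep n x' q' := by
  funext t
  unfold ratStep
  congr 1
  ext y
  refine exists_congr fun i => and_congr_right fun hi => ?_
  rw [hx i hi.le, hx (i+1) hi, hq i hi]

end RatStep

lemma countable_ratStepSet : ratStepSet.Countable := by
  refine (countable_range fun p : ℕ × List ℚ × List ℚ =>
    ratStep p.1 (p.2.1.getD · 0) (p.2.2.getD · 0)).mono ?_
  rintro g ⟨n, x, q, -, -, -, -, -, rfl⟩
  refine ⟨(n, (List.range (n+1)).map x, (List.range n).map q), ratStep_congr ?_ ?_⟩ <;>
    intro i hi <;> simp [List.getD_eq_getElem?_getD, hi]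

lemma exists_HH_ratStep_le {f : ℝ → ℝ} (hf : memE f) {n : ℕ} {x : ℕ → ℚ} (hx0 : x 0 = 0)
    (hxn : x n = 1) (hmono : ∀ i < n, x i < x (i+1)) {δ η : ℝ}
    (hmesh : ∀ i < n, (x (i+1) - x i : ℝ) ≤ δ) (hη : 0 < η) :
    ∃ q : ℕ → ℚ, (∀ i < n, 0 ≤ q i) ∧ HH f (ratStep n x q) ≤ δ + η := by
  obtain ⟨hf0, hfusc⟩ := hf
  have hn : 0 < n := Nat.pos_of_ne_zero fun h => by simp [h, hx0] at hxn
  have hmonoR : ∀ i < n, (x i : ℝ) < x (i+1) := fun i hi => by exact_mod_cast hmono i hi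
  have hcell : ∀ i < n, Icc (x i : ℝ) (x (i+1)) ⊆ Icc 0 1 := fun i hi => by
    simpa [hx0, hxn] using Icc_subset_Icc_of_lt_succ hmonoR hi
  have hcover : ∀ t ∈ Icc (0:ℝ) 1, ∃ i < n, t ∈ Icc (x i : ℝ) (x (i+1)) := fun t ht =>
    exists_mem_Icc_of_mem_Icc (a := fun i => (x i : ℝ)) hn (by simpa [hx0, hxn] using ht)
  choose! s hs r hfr hrs using fun i (hi : i < n) =>
    (hfusc.mono (hcell i hi)).exists_rat_gt_lt_add (nonempty_Icc.2 (hmonoR i hi).le)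
      isCompact_Icc hη
  refine ⟨r, fun i hi => ?_, ?_⟩
  · exact_mod_cast ((hf0 _ (hcell i hi (hs i hi))).trans_lt (hfr i hi _ (hs i hi))).le
  refine HH_le_of_le_of_forall_exists_near ((sub_pos.2 (hmonoR 0 hn)).le.trans (hmesh 0 hn))
    hη.le hf0 (fun t ht => ?_) (fun t ht => ?_)
  · obtain ⟨i, hi, hti⟩ := hcover t ht
    exact (hfr i hi t hti).le.trans (le_ratStep hi hti)
  · obtain ⟨i, hi, hti⟩ := hcover t ht
    obtain ⟨j, hj, htj, hgt⟩ := exists_ratStep_eq (q := r) hi hti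
    refine ⟨s j, hcell j hj (hs j hj), ?_, hgt ▸ (hrs j hj).le⟩
    have := hmesh j hj
    rw [abs_le]
    constructor <;> linarith [htj.1, htj.2, (hs j hj).1, (hs j hj).2]

lemma exists_mem_ratStepSet_HH_lt {f : ℝ → ℝ} (hf : memE f) {ε : ℝ} (hε : 0 < ε) :
    ∃ g ∈ ratStepSet, HH f g < ε := by
  obtain ⟨n, hn⟩ := exists_nat_one_div_lt (half_pos hε)
  have hN : (0 : ℚ) < n + 1 := n.cast_add_one_pos
  set x : ℕ → ℚ := fun i => i / (n + 1) with hx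
  have hx0 : x 0 = 0 := by simp [hx]
  have hxn : x (n + 1) = 1 := by simp [hx, hN.ne']
  have hmono : ∀ i < n + 1, x i < x (i+1) := fun i _ => by simp only [hx]; gcongr; simp
  obtain ⟨q, hq, hHH⟩ := exists_HH_ratStep_le hf hx0 hxn hmono (δ := 1 / (n + 1))
    (fun i _ => by simp only [hx]; push_cast; rw [← sub_div, add_sub_cancel_left]) (half_pos hε)
  exact ⟨_, ⟨n + 1, x, q, n.succ_pos, hx0, hxn, hmono, hq, rfl⟩, hHH.trans_lt (by linarith)⟩

/-- Separability of `(𝓔, ℍ)`: the countable family of rational step functions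
is `ℍ`-dense in the space of nonnegative USC functions on `[0,1]`. -/
theorem stmt_11 :
    Set.Countable ratStepSet ∧
    (∀ g ∈ ratStepSet, memE g) ∧
    (∀ f : ℝ → ℝ, memE f → ∀ ε : ℝ, 0 < ε → ∃ g ∈ ratStepSet, HH f g < ε) := by
  refine ⟨countable_ratStepSet, ?_, fun f hf ε hε => exists_mem_ratStepSet_HH_lt hf hε⟩
  rintro g ⟨n, x, q, -, -, -, -, hq, rfl⟩
  exact memE_ratStep hq
end
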